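/- arXiv:2012.05764 — 3 statements merged into one kernel-verified Lean document; each statement's English description precedes it below -/
import Mathlib

section
/- Let S be a compact region with finite measure μ(S) partitioned into measurable sets S_1,…,S_K with areas μ_1,…,μ_K, and let λ_1,…,λ_K > 0 with λ_M = max_k λ_k, λ_m = min_k λ_k. Fix δ > 1 and let N be a Poisson process on S with constant intensity λ* = δλ_M − λ_m; let |N_k| be the number of points of N in S_k. Then the estimator M̂ = exp{−μ(S)λ_m} ∏_{k=1}^K ((δλ_M − λ_k)/(δλ_M − λ_m))^{|N_k|} satisfies E[M̂] = exp{−∑_{k=1}^K λ_k μ_k}. -/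
open MeasureTheory ProbabilityTheory Real
open scoped NNReal

/- The counts are independent Poisson variables, so the expectation of the product factorises into
Poisson generating functions `E[c ^ N] = exp (r (c - 1))`. With `r_k = μ_k (δλ_M - λ_m)` and
`c_k = (δλ_M - λ_k) / (δλ_M - λ_m)` the exponent `r_k (c_k - 1)` is `μ_k (λ_m - λ_k)`, and the
prefactor `exp (-μ(S) λ_m)` cancels the `λ_m` terms. -/

theorem integral_pow_poissonMeasure (r : ℝ≥0) (c : ℝ) :
    ∫ n, c ^ n ∂poissonMeasure r = exp (r * (c - 1)) := by
  rw [integral_poissonMeasure]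
  calc ∑' n : ℕ, (exp (-r) * r ^ n / n.factorial) • c ^ n
      = ∑' n : ℕ, exp (-r) * ((r * c) ^ n / n.factorial) := by
        congr with n
        rw [smul_eq_mul, mul_pow]
        ring
    _ = exp (-r) * exp (r * c) := by
        rw [tsum_mul_left, exp_eq_exp_ℝ,
          (NormedSpace.expSeries_div_hasSum_exp ((r : ℝ) * c)).tsum_eq]
    _ = exp (r * (c - 1)) := by
        rw [← exp_add]
        ring_nf

theorem ProbabilityTheory.iIndepFun.integral_prod_pow_of_map_eq_poissonMeasure
    {Ω ι : Type*} [MeasurableSpace Ω] {P : Measure Ω} [Fintype ι] {N : ι → Ω → ℕ}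
    (hN : iIndepFun N P) (hmeas : ∀ i, AEMeasurable (N i) P) {r : ι → ℝ≥0}
    (hlaw : ∀ i, P.map (N i) = poissonMeasure (r i)) (c : ι → ℝ) :
    ∫ ω, ∏ i, c i ^ N i ω ∂P = exp (∑ i, r i * (c i - 1)) := by
  rw [hN.integral_fun_prod_comp (f := fun i n => c i ^ n) hmeas
    (fun _ => .of_discrete), exp_sum]
  refine Finset.prod_congr rfl fun i _ => ?_
  rw [← integral_pow_poissonMeasure, ← hlaw i, integral_map (hmeas i) .of_discrete]

theorem poisson_estimator_unbiased_general
    {Ω : Type*} [MeasurableSpace Ω] (P : Measure Ω)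
    (K : ℕ)
    (μ : Fin K → ℝ) (hμ : ∀ k, 0 ≤ μ k) (μS : ℝ) (hμS : μS = ∑ k, μ k)
    (lam : Fin K → ℝ) (hlam : ∀ k, 0 < lam k)
    (lamM lamm : ℝ)
    (hM : IsGreatest (Set.range lam) lamM) (hm : IsLeast (Set.range lam) lamm)
    (δ : ℝ) (hδ : 1 < δ)
    (N : Fin K → Ω → ℕ) (hNmeas : ∀ k, Measurable (N k))
    (hNdist : ∀ k, Measure.map (N k) P
      = poissonMeasure ((μ k * (δ * lamM - lamm)).toNNReal))
    (hNindep : iIndepFun N P) :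
    ∫ ω, Real.exp (-(μS * lamm)) *
        ∏ k, ((δ * lamM - lam k) / (δ * lamM - lamm)) ^ (N k ω) ∂P
      = Real.exp (-∑ k, lam k * μ k) := by
  have hrate_pos : 0 < δ * lamM - lamm := by
    obtain ⟨j, rfl⟩ := hM.1
    nlinarith [hlam j, hm.2 ⟨j, rfl⟩]
  have hexponent : ∀ k, ((μ k * (δ * lamM - lamm)).toNNReal : ℝ) *
      ((δ * lamM - lam k) / (δ * lamM - lamm) - 1) = μ k * (lamm - lam k) := fun k => by
    rw [Real.coe_toNNReal _ (mul_nonneg (hμ k) hrate_pos.le)]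
    field_simp
    ring
  rw [integral_const_mul, hNindep.integral_prod_pow_of_map_eq_poissonMeasure
    (fun k => (hNmeas k).aemeasurable) hNdist, ← exp_add, hμS]
  simp only [hexponent, Finset.sum_mul, ← Finset.sum_neg_distrib, ← Finset.sum_add_distrib]
  congr 1
  exact Finset.sum_congr rfl fun k _ => by ring

/-- Unbiasedness of the Poisson estimator: if the counts `|N_k|` in the regions of a
partition of `S` (induced by a homogeneous Poisson process of rate `λ* = δλ_M - λ_m`)
are independent Poisson random variables with means `μ_k λ*`, then
`M̂ = exp(-μ(S)λ_m) ∏_k ((δλ_M - λ_k)/(δλ_M - λ_m))^{|N_k|}` has expectation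
`exp(-∑_k λ_k μ_k)`. -/
theorem poisson_estimator_unbiased
    {Ω : Type*} [MeasurableSpace Ω] (P : Measure Ω) [IsProbabilityMeasure P]
    (K : ℕ) (hK : 0 < K)
    (μ : Fin K → ℝ) (hμ : ∀ k, 0 ≤ μ k) (μS : ℝ) (hμS : μS = ∑ k, μ k)
    (lam : Fin K → ℝ) (hlam : ∀ k, 0 < lam k)
    (lamM lamm : ℝ)
    (hM : IsGreatest (Set.range lam) lamM) (hm : IsLeast (Set.range lam) lamm)
    (δ : ℝ) (hδ : 1 < δ)
    (N : Fin K → Ω → ℕ) (hNmeas : ∀ k, Measurable (N k))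
    (hNdist : ∀ k, Measure.map (N k) P
      = poissonMeasure ((μ k * (δ * lamM - lamm)).toNNReal))
    (hNindep : iIndepFun N P) :
    ∫ ω, Real.exp (-(μS * lamm)) *
        ∏ k, ((δ * lamM - lam k) / (δ * lamM - lamm)) ^ (N k ω) ∂P
      = Real.exp (-∑ k, lam k * μ k) :=
  poisson_estimator_unbiased_general P K μ hμ μS hμS lam hlam lamM lamm hM hm δ hδ N hNmeas hNdist
    hNindep
end

section
/- With the notation above, the variance of M̂_1 = ∏_{k=1}^K ((δλ_M − λ_k)/(δλ_M − λ_m))^{|N_k|}, viewed as a function of δ on (1, ∞), is finite and strictly decreasing in δ (assuming not all λ_k are equal). -/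
/-!
With `d = δλ_M − λ_m > 0` and `a_k = λ_k − λ_m`, one has `δλ_M − λ_k = d − a_k`, so the `k`-th
term of the exponent is `μ_k (2a_k − a_k²/d)`. The exponent is therefore
`2∑ μ_k a_k − (∑ μ_k a_k²)/d`, where `∑ μ_k a_k² > 0` as soon as some `λ_k ≠ λ_m`; it increases
strictly with `d`, and `d` increases strictly with `δ` because `λ_M > 0`.
-/

open Real Set

lemma mul_one_sub_div_sq {x m : ℝ} (hxm : x - m ≠ 0) (b : ℝ) :
    (x - m) * (1 - ((x - b) / (x - m)) ^ 2) = 2 * (b - m) - (b - m) ^ 2 / (x - m) := by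
  field_simp
  ring

lemma sum_mul_mul_one_sub_div_sq {ι : Type*} [Fintype ι] (w b : ι → ℝ) {x m : ℝ}
    (hxm : x - m ≠ 0) :
    ∑ i, w i * (x - m) * (1 - ((x - b i) / (x - m)) ^ 2)
      = 2 * ∑ i, w i * (b i - m) - (∑ i, w i * (b i - m) ^ 2) / (x - m) := by
  simp only [mul_assoc, mul_one_sub_div_sq hxm, Finset.mul_sum, Finset.sum_div,
    ← Finset.sum_sub_distrib]
  exact Finset.sum_congr rfl fun i _ => by ring

lemma sum_mul_sq_pos {ι : Type*} [Fintype ι] {w a : ι → ℝ} (hw : ∀ i, 0 < w i)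
    (ha : ∃ i, a i ≠ 0) : 0 < ∑ i, w i * a i ^ 2 := by
  obtain ⟨i, hi⟩ := ha
  exact Finset.sum_pos' (fun j _ => by have := hw j; positivity)
    ⟨i, Finset.mem_univ i, mul_pos (hw i) (sq_pos_of_ne_zero hi)⟩

lemma strictMonoOn_const_sub_div {S : ℝ} (hS : 0 < S) (C : ℝ) :
    StrictMonoOn (fun d : ℝ => C - S / d) (Ioi 0) := fun _ hx _ _ hxy =>
  sub_lt_sub_left (div_lt_div_of_pos_left hS hx hxy) C

theorem poisson_estimator_variance_strictAnti_general
    (K : ℕ)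
    (μ : Fin K → ℝ) (hμ : ∀ k, 0 < μ k)
    (lam : Fin K → ℝ) (hlam : ∀ k, 0 < lam k)
    (lamM lamm : ℝ)
    (hM : IsGreatest (Set.range lam) lamM) (hm : IsLeast (Set.range lam) lamm)
    (hne : ∃ k₁ k₂, lam k₁ ≠ lam k₂) :
    StrictAntiOn
      (fun δ : ℝ =>
        Real.exp (-∑ k, μ k * (δ * lamM - lamm) *
            (1 - ((δ * lamM - lam k) / (δ * lamM - lamm)) ^ 2))
          - Real.exp (-(2 * ∑ k, μ k * (lam k - lamm))))
      (Set.Ioi 1) := by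
  obtain ⟨⟨kM, hkM⟩, -⟩ := hM
  have hlamM : 0 < lamM := hkM ▸ hlam kM
  have hmM : lamm ≤ lamM := hm.2 ⟨kM, hkM⟩
  set d : ℝ → ℝ := fun δ => δ * lamM - lamm
  have hd_mono : StrictMono d := fun x y hxy => by simp only [d]; gcongr
  have hd_pos : MapsTo d (Ioi 1) (Ioi 0) := fun δ (hδ : 1 < δ) => by
    simp only [d, mem_Ioi]; nlinarith
  have hS : 0 < ∑ k, μ k * (lam k - lamm) ^ 2 := by
    refine sum_mul_sq_pos hμ ?_
    by_contra! h
    obtain ⟨k₁, k₂, h₁₂⟩ := hne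
    exact h₁₂ (by linarith [h k₁, h k₂])
  have hexponent : EqOn
      (fun δ => ∑ k, μ k * (δ * lamM - lamm) * (1 - ((δ * lamM - lam k) / (δ * lamM - lamm)) ^ 2))
      ((fun t => 2 * ∑ k, μ k * (lam k - lamm) - (∑ k, μ k * (lam k - lamm) ^ 2) / t) ∘ d)
      (Ioi 1) := fun δ hδ => sum_mul_mul_one_sub_div_sq μ lam (hd_pos hδ).ne'
  have hmono := ((strictMonoOn_const_sub_div hS _).comp (hd_mono.strictMonoOn _) hd_pos).congr
    hexponent.symm
  exact fun x hx y hy hxy => sub_lt_sub_right (exp_lt_exp.2 (neg_lt_neg (hmono hx hy hxy))) _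

/-- The variance of the Poisson estimator `M̂₁`, viewed as a function of `δ` on `(1,∞)`,
namely `V(δ) = exp{−∑_k μ_k(δλ_M−λ_m)[1 − ((δλ_M−λ_k)/(δλ_M−λ_m))²]}
             − exp{−2∑_k μ_k(λ_k−λ_m)}`,
is strictly decreasing in `δ` (assuming not all `λ_k` are equal). -/
theorem poisson_estimator_variance_strictAnti
    (K : ℕ) (hK : 0 < K)
    (μ : Fin K → ℝ) (hμ : ∀ k, 0 < μ k)
    (lam : Fin K → ℝ) (hlam : ∀ k, 0 < lam k)
    (lamM lamm : ℝ)
    (hM : IsGreatest (Set.range lam) lamM) (hm : IsLeast (Set.range lam) lamm)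
    (hne : ∃ k₁ k₂, lam k₁ ≠ lam k₂) :
    StrictAntiOn
      (fun δ : ℝ =>
        Real.exp (-∑ k, μ k * (δ * lamM - lamm) *
            (1 - ((δ * lamM - lam k) / (δ * lamM - lamm)) ^ 2))
          - Real.exp (-(2 * ∑ k, μ k * (lam k - lamm))))
      (Set.Ioi 1) :=
  poisson_estimator_variance_strictAnti_general K μ hμ lam hlam lamM lamm hM hm hne
end

section
/- In a pseudo-marginal Metropolis–Hastings algorithm targeting π(θ) using a nonnegative unbiased estimator π̂(θ; U) with U ~ m_θ(·) and E_U[π̂(θ;U)] = π(θ), the augmented chain on (θ, U) with acceptance probability min{1, (π̂(θ̈;Ü)q(θ|θ̈))/(π̂(θ;U)q(θ̈|θ))} (with Ü ~ m_{θ̈} drawn independently) has invariant density proportional to π̂(θ;u)m_θ(u), whose θ-marginal is π(θ). -/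
/-!
The pseudo-marginal chain is an ordinary Metropolis–Hastings chain on `(θ, u)` whose target
is `π̂(θ;u) m_θ(u)` and whose proposal is `q(θ̈|θ) m_θ̈(ü)`: the `m` factors of the target and
of the proposal cancel in the acceptance ratio. Flux times acceptance is therefore
`m_θ(u) m_θ̈(ü) min{π̂(θ;u) q(θ̈|θ), π̂(θ̈;ü) q(θ|θ̈)}`, which is symmetric in the two states.
-/

open MeasureTheory

section

variable {K : Type*} [Field K] [LinearOrder K] [IsStrictOrderedRing K]

theorem mul_min_one_div {a b : K} (ha : 0 ≤ a) (hb : 0 ≤ b) : a * min 1 (b / a) = min a b := by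
  rcases ha.eq_or_lt with rfl | ha
  · simp [hb]
  · rw [mul_min_of_nonneg _ _ ha.le, mul_one, mul_div_cancel₀ _ ha.ne']

theorem mul_min_one_div_comm {a b : K} (ha : 0 ≤ a) (hb : 0 ≤ b) :
    a * min 1 (b / a) = b * min 1 (a / b) := by
  rw [mul_min_one_div ha hb, mul_min_one_div hb ha, min_comm]

end

theorem pseudo_marginal_invariant_general
    {α γ : Type*} [MeasurableSpace γ]
    (μγ : Measure γ)
    (π : α → ℝ) (q : α → α → ℝ) (m : α → γ → ℝ) (hatπ : α → γ → ℝ)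
    (hq : ∀ θ θ', 0 < q θ θ')
    (hhat : ∀ θ u, 0 ≤ hatπ θ u)
    (hunbiased : ∀ θ, ∫ u, hatπ θ u * m θ u ∂μγ = π θ) :
    -- detailed balance of the augmented kernel w.r.t. the density `π̂(θ;u)m_θ(u)`
    (∀ θ θ' : α, ∀ u u' : γ,
      (hatπ θ u * m θ u) * (q θ θ' * m θ' u' *
          min 1 ((hatπ θ' u' * q θ' θ) / (hatπ θ u * q θ θ')))
        = (hatπ θ' u' * m θ' u') * (q θ' θ * m θ u *
            min 1 ((hatπ θ u * q θ θ') / (hatπ θ' u' * q θ' θ)))) ∧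
    -- the `θ`-marginal of the invariant density is `π`
    (∀ θ, ∫ u, hatπ θ u * m θ u ∂μγ = π θ) := by
  refine ⟨fun θ θ' u u' => ?_, hunbiased⟩
  have flux_symm := mul_min_one_div_comm (mul_nonneg (hhat θ u) (hq θ θ').le)
    (mul_nonneg (hhat θ' u') (hq θ' θ).le)
  linear_combination (m θ u * m θ' u') * flux_symm

/-- Pseudo-marginal Metropolis–Hastings (Andrieu & Roberts 2009): if `π̂(θ;u) ≥ 0` is
an unbiased estimator of the target `π(θ)` with auxiliary variable `u ~ m_θ`, then the
augmented chain on `(θ,u)` that proposes `θ̈ ~ q(·|θ)`, `ü ~ m_θ̈` and accepts with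
probability `min{1, (π̂(θ̈;ü)q(θ|θ̈))/(π̂(θ;u)q(θ̈|θ))}` satisfies detailed balance
w.r.t. the density proportional to `π̂(θ;u)m_θ(u)`, whose `θ`-marginal is `π(θ)`. -/
theorem pseudo_marginal_invariant
    {α γ : Type*} [MeasurableSpace α] [MeasurableSpace γ]
    (μγ : Measure γ) [SigmaFinite μγ]
    (π : α → ℝ) (q : α → α → ℝ) (m : α → γ → ℝ) (hatπ : α → γ → ℝ)
    (hq : ∀ θ θ', 0 < q θ θ') (hm : ∀ θ u, 0 < m θ u)
    (hhat : ∀ θ u, 0 ≤ hatπ θ u)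
    (hunbiased : ∀ θ, ∫ u, hatπ θ u * m θ u ∂μγ = π θ) :
    -- detailed balance of the augmented kernel w.r.t. the density `π̂(θ;u)m_θ(u)`
    (∀ θ θ' : α, ∀ u u' : γ,
      (hatπ θ u * m θ u) * (q θ θ' * m θ' u' *
          min 1 ((hatπ θ' u' * q θ' θ) / (hatπ θ u * q θ θ')))
        = (hatπ θ' u' * m θ' u') * (q θ' θ * m θ u *
            min 1 ((hatπ θ u * q θ θ') / (hatπ θ' u' * q θ' θ)))) ∧
    -- the `θ`-marginal of the invariant density is `π`
    (∀ θ, ∫ u, hatπ θ u * m θ u ∂μγ = π θ) :=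
  pseudo_marginal_invariant_general μγ π q m hatπ hq hhat hunbiased
end
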